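/- arXiv:2506.14732 — 5 statements merged into one kernel-verified Lean document; each statement's English description precedes it below -/
import Mathlib

section
/- Let K be an algebraically closed field, let V and W be nonzero finite-dimensional K-vector spaces with dim V = m and dim W = n, and let f : V → V and g : W → W be diagonalizable K-linear endomorphisms. Suppose α ∈ K is a nonzero scalar such that the eigenspace ker(α·id − f ⊗ g) of the Kronecker product f ⊗ g (the induced endomorphism of V ⊗[K] W) has dimension strictly greater than mn − min(m,n). Then both f and g are homotheties: there exist λ, μ ∈ K with f = λ·id_V and g = μ·id_W (and λμ = α). -/
/-!
If `f` is not a homothety, some `v` makes `v, f v` linearly independent, and then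
`w ↦ (α - f ⊗ g)(v ⊗ w) = v ⊗ α w - f v ⊗ g w` is injective because `α ≠ 0`. So the rank of
`α - f ⊗ g` is at least `dim W`, and its kernel has dimension at most `m n - n`. Swapping the two
factors gives the same for `g`. Once `f = λ` and `g = μ`, the map `α - f ⊗ g = (α - λ μ) • id`
has a nonzero kernel, which forces `λ μ = α`.
-/

open TensorProduct Module

section

variable {K V W : Type*} [Field K] [AddCommGroup V] [Module K V] [AddCommGroup W] [Module K W]

theorem LinearIndependent.exists_dual_apply_eq_one_apply_eq_zero {v u : V}
    (h : LinearIndependent K ![v, u]) : ∃ φ : Dual K V, φ v = 1 ∧ φ u = 0 := by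
  have hv : v ∉ K ∙ u := fun hmem => by
    obtain ⟨a, rfl⟩ := Submodule.mem_span_singleton.mp hmem
    exact one_ne_zero (LinearIndependent.pair_iff.mp h 1 (-a) (by simp)).1
  obtain ⟨φ, hφv, hφu⟩ := Submodule.exists_dual_map_eq_bot_of_notMem hv inferInstance
  have hu : φ u = 0 := by
    simpa [hφu] using Submodule.mem_map_of_mem (f := φ) (Submodule.mem_span_singleton_self u)
  exact ⟨(φ v)⁻¹ • φ, inv_mul_cancel₀ hφv, by simp [hu]⟩

theorem LinearIndependent.eq_zero_of_tmul_add_tmul_eq_zero {v u : V}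
    (h : LinearIndependent K ![v, u]) {w w' : W} (h0 : v ⊗ₜ[K] w + u ⊗ₜ[K] w' = 0) : w = 0 := by
  obtain ⟨φ, hφv, hφu⟩ := h.exists_dual_apply_eq_one_apply_eq_zero
  simpa [hφv, hφu] using congrArg (TensorProduct.lid K W ∘ φ.rTensor W) h0

theorem injective_sub_map_comp_mk {f : End K V} {v : V} (hv : LinearIndependent K ![v, f v])
    (g : End K W) {α : K} (hα : α ≠ 0) :
    Function.Injective ((α • LinearMap.id - map f g) ∘ₗ TensorProduct.mk K V W v) := by
  rw [← LinearMap.ker_eq_bot, LinearMap.ker_eq_bot']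
  intro w hw
  have h0 : v ⊗ₜ[K] (α • w) + f v ⊗ₜ[K] (-g w) = 0 := by
    simpa [sub_eq_add_neg, smul_tmul', tmul_neg] using hw
  exact (smul_eq_zero.mp (hv.eq_zero_of_tmul_add_tmul_eq_zero h0)).resolve_left hα

theorem finrank_ker_sub_map_comm (f : End K V) (g : End K W) (α : K) :
    finrank K (LinearMap.ker (α • LinearMap.id - map g f))
      = finrank K (LinearMap.ker (α • LinearMap.id - map f g)) := by
  have hcomm : (α • LinearMap.id - map g f) ∘ₗ (TensorProduct.comm K V W).toLinearMap
      = (TensorProduct.comm K V W).toLinearMap ∘ₗ (α • LinearMap.id - map f g) := by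
    ext v w
    simp
  have hker := congrArg LinearMap.ker hcomm
  rw [LinearEquiv.ker_comp, LinearMap.ker_comp, Submodule.comap_equiv_eq_map_symm] at hker
  rw [← hker, LinearEquiv.finrank_map_eq]

section FiniteDimensional

variable [FiniteDimensional K V] [FiniteDimensional K W]

theorem finrank_ker_sub_map_add_finrank_le {f : End K V} (hf : ∀ c : K, f ≠ c • LinearMap.id)
    (g : End K W) {α : K} (hα : α ≠ 0) :
    finrank K (LinearMap.ker (α • LinearMap.id - map f g)) + finrank K W
      ≤ finrank K V * finrank K W := by
  obtain ⟨v, hv⟩ : ∃ v, LinearIndependent K ![v, f v] := by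
    by_contra! h
    obtain ⟨c, rfl⟩ := LinearMap.exists_eq_smul_id_of_forall_notLinearIndependent h
    exact hf c rfl
  have hrange : finrank K W ≤ finrank K (LinearMap.range (α • LinearMap.id - map f g)) := by
    rw [← LinearMap.finrank_range_of_inj (injective_sub_map_comp_mk hv g hα)]
    exact Submodule.finrank_mono (LinearMap.range_comp_le_range _ _)
  have hrank := (α • LinearMap.id - map f g).finrank_range_add_finrank_ker
  rw [finrank_tensorProduct] at hrank
  omega

theorem exists_eq_smul_id_of_lt_finrank_ker_sub_map (f : End K V) (g : End K W) {α : K}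
    (hα : α ≠ 0) (h : finrank K V * finrank K W - finrank K W
      < finrank K (LinearMap.ker (α • LinearMap.id - map f g))) :
    ∃ c : K, f = c • LinearMap.id := by
  by_contra! hf
  have := finrank_ker_sub_map_add_finrank_le hf g hα
  omega

end FiniteDimensional

end

theorem kronecker_eigenspace_large_implies_homothety_general
    {K : Type*} [Field K]
    {V W : Type*} [AddCommGroup V] [Module K V] [AddCommGroup W] [Module K W]
    [FiniteDimensional K V] [FiniteDimensional K W]
    (f : Module.End K V) (g : Module.End K W)
    (α : K) (hα : α ≠ 0)
    (hdim : Module.finrank K V * Module.finrank K W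
        - min (Module.finrank K V) (Module.finrank K W)
      < Module.finrank K
          (LinearMap.ker (α • (LinearMap.id : Module.End K (V ⊗[K] W))
            - TensorProduct.map f g))) :
    ∃ lam mu : K, f = lam • (LinearMap.id : Module.End K V)
      ∧ g = mu • (LinearMap.id : Module.End K W) ∧ lam * mu = α := by
  have hminV := min_le_left (finrank K V) (finrank K W)
  have hminW := min_le_right (finrank K V) (finrank K W)
  obtain ⟨lam, rfl⟩ := exists_eq_smul_id_of_lt_finrank_ker_sub_map f g hα (by omega)
  obtain ⟨mu, rfl⟩ := exists_eq_smul_id_of_lt_finrank_ker_sub_map g (lam • LinearMap.id : End K V)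
    hα (by rw [finrank_ker_sub_map_comm, Nat.mul_comm]; omega)
  refine ⟨lam, mu, rfl, rfl, ?_⟩
  have hT : α • LinearMap.id - map (lam • LinearMap.id) (mu • LinearMap.id)
      = (α - lam * mu) • (LinearMap.id : End K (V ⊗[K] W)) := by
    rw [map_smul_left, map_smul_right, map_id, smul_smul]
    exact (sub_smul _ _ _).symm
  by_contra hne
  rw [hT, LinearMap.ker_smul _ _ (sub_ne_zero.mpr (Ne.symm hne)), LinearMap.ker_id,
    finrank_bot] at hdim
  omega

/-- **Lemma 7.6 (Kronecker products).** If the Kronecker product `f ⊗ g` of two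
diagonalizable endomorphisms of nonzero finite-dimensional vector spaces over an
algebraically closed field has an eigenvalue `α ≠ 0` whose eigenspace has dimension
strictly greater than `m * n - min m n`, then `f` and `g` are homotheties. -/
theorem kronecker_eigenspace_large_implies_homothety
    {K : Type*} [Field K] [IsAlgClosed K]
    {V W : Type*} [AddCommGroup V] [Module K V] [AddCommGroup W] [Module K W]
    [FiniteDimensional K V] [FiniteDimensional K W]
    [Nontrivial V] [Nontrivial W]
    (f : Module.End K V) (g : Module.End K W)
    (hf : (⨆ μ : K, Module.End.eigenspace f μ) = ⊤)
    (hg : (⨆ μ : K, Module.End.eigenspace g μ) = ⊤)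
    (α : K) (hα : α ≠ 0)
    (hdim : Module.finrank K V * Module.finrank K W
        - min (Module.finrank K V) (Module.finrank K W)
      < Module.finrank K
          (LinearMap.ker (α • (LinearMap.id : Module.End K (V ⊗[K] W))
            - TensorProduct.map f g))) :
    ∃ lam mu : K, f = lam • (LinearMap.id : Module.End K V)
      ∧ g = mu • (LinearMap.id : Module.End K W) ∧ lam * mu = α :=
  kronecker_eigenspace_large_implies_homothety_general f g α hα hdim
end

section
/- Let K be a field, let α ∈ K be nonzero, let m, n ≥ 1, and let λ₁, …, λ_m ∈ K and μ₁, …, μ_n ∈ K. If the number of pairs (i, j) ∈ {1,…,m} × {1,…,n} with λᵢ·μⱼ = α is strictly greater than mn − min(m,n), then λ₁ = λ₂ = … = λ_m and μ₁ = μ₂ = … = μ_n. -/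
/-- Combinatorial core of Lemma 7.6: if strictly more than `m*n - min m n` of the
products `λᵢ · μⱼ` equal a fixed nonzero `α`, then both families of scalars are
constant. -/
theorem constant_of_many_products_eq
    {K : Type*} [Field K] {α : K} (hα : α ≠ 0)
    {m n : ℕ} (hm : 1 ≤ m) (hn : 1 ≤ n)
    (lam : Fin m → K) (mu : Fin n → K)
    (h : m * n - min m n < {p : Fin m × Fin n | lam p.1 * mu p.2 = α}.ncard) :
    (∀ i j : Fin m, lam i = lam j) ∧ (∀ i j : Fin n, mu i = mu j) := by
  set G : Set (Fin m × Fin n) := {p | lam p.1 * mu p.2 = α} with hG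
  -- cardinality of complement
  have hcompl : G.ncard + Gᶜ.ncard = m * n := by
    rw [Set.ncard_add_ncard_compl]
    simp [Nat.card_eq_fintype_card]
  have hGle : G.ncard ≤ m * n := by omega
  have hB : Gᶜ.ncard < min m n := by omega
  have key : ∀ k : ℕ, min m n ≤ k →
      ∀ g : Fin k → Fin m × Fin n, Function.Injective g →
      (∀ j, g j ∈ Gᶜ) → False := by
    intro k hk g hg hmem
    have hsub : Set.range g ⊆ Gᶜ := by rintro _ ⟨j, rfl⟩; exact hmem j
    have h1 : (Set.range g).ncard = k := by
      rw [show (Set.range g).ncard = Nat.card (Set.range g) from rfl,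
        Nat.card_range_of_injective hg, Nat.card_eq_fintype_card, Fintype.card_fin]
    have h2 : (Set.range g).ncard ≤ Gᶜ.ncard :=
      Set.ncard_le_ncard hsub (Set.toFinite _)
    omega
  constructor
  · intro i i'
    by_contra hne
    -- for each j, (i,j) ∈ Gᶜ or (i',j) ∈ Gᶜ, and define injection Fin n → Gᶜ
    have hpick : ∀ j : Fin n, (i, j) ∈ Gᶜ ∨ (i', j) ∈ Gᶜ := by
      intro j
      by_contra hc
      push_neg at hc
      obtain ⟨h1, h2⟩ := hc
      simp only [Set.mem_compl_iff, not_not, hG, Set.mem_setOf_eq] at h1 h2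
      have hmu : mu j ≠ 0 := by
        intro h0; rw [h0, mul_zero] at h1; exact hα h1.symm
      exact hne (mul_right_cancel₀ hmu (h1.trans h2.symm))
    classical
    refine key n (min_le_right m n)
      (fun j => if (i, j) ∈ Gᶜ then (i, j) else (i', j)) ?_ ?_
    · intro a b hab
      have := congrArg Prod.snd hab
      simpa [apply_ite Prod.snd] using this
    · intro j
      by_cases hj : (i, j) ∈ Gᶜ
      · simpa [hj] using hj
      · simpa [hj] using (hpick j).resolve_left hj
  · intro j j'
    by_contra hne
    have hpick : ∀ i : Fin m, (i, j) ∈ Gᶜ ∨ (i, j') ∈ Gᶜ := by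
      intro i
      by_contra hc
      push_neg at hc
      obtain ⟨h1, h2⟩ := hc
      simp only [Set.mem_compl_iff, not_not, hG, Set.mem_setOf_eq] at h1 h2
      have hlam : lam i ≠ 0 := by
        intro h0; rw [h0, zero_mul] at h1; exact hα h1.symm
      exact hne (mul_left_cancel₀ hlam (h1.trans h2.symm))
    classical
    refine key m (min_le_left m n)
      (fun i => if (i, j) ∈ Gᶜ then (i, j) else (i, j')) ?_ ?_
    · intro a b hab
      have := congrArg Prod.fst hab
      simpa [apply_ite Prod.fst] using this
    · intro i
      by_cases hi : (i, j) ∈ Gᶜ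
      · simpa [hi] using hi
      · simpa [hi] using (hpick i).resolve_left hi
end

section
/- Let K be an algebraically closed field, let V and W be nonzero finite-dimensional K-vector spaces, and let f : V → V and g : W → W be nonzero K-linear endomorphisms. If the Kronecker product f ⊗ g (the induced endomorphism of V ⊗[K] W) is semisimple (equivalently, diagonalizable, as K is algebraically closed), then f and g are both semisimple. -/
/-!
If `w` is an eigenvector of `g` with eigenvalue `μ ≠ 0`, then `v ↦ v ⊗ w` embeds `V` into
`V ⊗ W` as an `f ⊗ g`-invariant subspace on which `f ⊗ g` acts as `μ • f`; restrictions of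
semisimple endomorphisms are semisimple, so `f` is. Such an eigenvalue exists as soon as `g` is not
nilpotent, and `g` cannot be nilpotent: otherwise `f ⊗ g` would be a nonzero nilpotent semisimple
endomorphism. The statement for `g` follows by symmetry.
-/

open TensorProduct

namespace Module.End

lemma IsSemisimple.of_injective_of_comp_eq {R M N : Type*} [CommRing R] [AddCommGroup M]
    [Module R M] [AddCommGroup N] [Module R N] {T : End R M} {f : End R N} (hT : T.IsSemisimple)
    {φ : N →ₗ[R] M} (hφ : Function.Injective φ) (h : T ∘ₗ φ = φ ∘ₗ f) : f.IsSemisimple := by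
  have hinv : φ.range ∈ T.invtSubmodule := by
    rintro _ ⟨x, rfl⟩
    exact ⟨f x, (LinearMap.congr_fun h x).symm⟩
  refine (LinearEquiv.isSemisimple_iff f (T.restrict hinv) (LinearEquiv.ofInjective φ hφ) ?_).mpr
    (hT.restrict hinv)
  ext x
  exact (LinearMap.congr_fun h x).symm

lemma exists_hasEigenvalue_ne_zero {K V : Type*} [Field K] [IsAlgClosed K] [AddCommGroup V]
    [Module K V] [FiniteDimensional K V] {f : End K V} (hf : ¬IsNilpotent f) :
    ∃ μ ≠ 0, f.HasEigenvalue μ := by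
  contrapose! hf
  have hbot : ∀ μ ≠ 0, f.maxGenEigenspace μ = ⊥ := fun μ hμ ↦ by
    by_contra h
    exact hf μ hμ ((hasUnifEigenvalue_iff_hasUnifEigenvalue_one (by simp)).mp h)
  have htop : f.maxGenEigenspace 0 = ⊤ := by
    rw [← iSup_maxGenEigenspace_eq_top f]
    refine le_antisymm (le_iSup (fun μ ↦ f.maxGenEigenspace μ) 0) (iSup_le fun μ ↦ ?_)
    rcases eq_or_ne μ 0 with rfl | hμ
    · exact le_rfl
    · simp [hbot μ hμ]
  refine isNilpotent_iff_of_finite.mpr fun m ↦ ?_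
  simpa using (f.mem_maxGenEigenspace 0 m).mp (htop ▸ Submodule.mem_top)

end Module.End

namespace TensorProduct

variable {K V W : Type*} [Field K] [AddCommGroup V] [Module K V] [AddCommGroup W] [Module K W]

lemma mk_flip_injective {w : W} (hw : w ≠ 0) : Function.Injective ((mk K V W).flip w) := by
  have : (mk K V W).flip w =
      (LinearMap.toSpanSingleton K W w).lTensor V ∘ₗ (TensorProduct.rid K V).symm.toLinearMap := by
    ext; simp
  rw [this]
  exact (Module.Flat.lTensor_preserves_injective_linearMap _ (smul_left_injective K hw)).comp
    (TensorProduct.rid K V).symm.injective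

lemma map_ne_zero {V' W' : Type*} [AddCommGroup V'] [Module K V'] [AddCommGroup W'] [Module K W']
    {f : V →ₗ[K] V'} {g : W →ₗ[K] W'} (hf : f ≠ 0) (hg : g ≠ 0) : map f g ≠ 0 := by
  obtain ⟨v, hv⟩ := DFunLike.ne_iff.mp hf
  obtain ⟨w, hw⟩ := DFunLike.ne_iff.mp hg
  intro h
  apply hv
  apply mk_flip_injective (K := K) (V := V') hw
  simpa using LinearMap.congr_fun h (v ⊗ₜ w)

lemma isSemisimple_of_isSemisimple_map_of_hasEigenvector {f : Module.End K V}
    {g : Module.End K W} (h : Module.End.IsSemisimple (map f g : Module.End K (V ⊗[K] W))) {μ : K} (hμ : μ ≠ 0) {w : W}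
    (hw : g.HasEigenvector μ w) : f.IsSemisimple := by
  have hμf : (μ • f).IsSemisimple :=
    h.of_injective_of_comp_eq (mk_flip_injective hw.2) <| by
      ext v
      simp [hw.apply_eq_smul]
  exact (Module.End.IsSemisimple_smul_iff hμ).mp hμf

lemma isSemisimple_left_of_isSemisimple_map [IsAlgClosed K] [FiniteDimensional K W]
    {f : Module.End K V} {g : Module.End K W} (hf : f ≠ 0) (hg : g ≠ 0)
    (h : Module.End.IsSemisimple (map f g : Module.End K (V ⊗[K] W))) : f.IsSemisimple := by
  have hg_nil : ¬IsNilpotent g := fun ⟨n, hn⟩ ↦ map_ne_zero hf hg <|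
    Module.End.eq_zero_of_isNilpotent_isSemisimple
      ⟨n, by rw [TensorProduct.map_pow, hn, map_zero_right]⟩ h
  obtain ⟨μ, hμ, hμg⟩ := Module.End.exists_hasEigenvalue_ne_zero hg_nil
  obtain ⟨w, hw⟩ := hμg.exists_hasEigenvector
  exact isSemisimple_of_isSemisimple_map_of_hasEigenvector h hμ hw

end TensorProduct

theorem isSemisimple_of_tensorProduct_map_isSemisimple_general
    {K : Type*} [Field K] [IsAlgClosed K]
    {V W : Type*} [AddCommGroup V] [Module K V] [AddCommGroup W] [Module K W]
    [FiniteDimensional K V] [FiniteDimensional K W]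
    (f : Module.End K V) (g : Module.End K W)
    (hf : f ≠ 0) (hg : g ≠ 0)
    (h : Module.End.IsSemisimple (TensorProduct.map f g : Module.End K (V ⊗[K] W))) :
    f.IsSemisimple ∧ g.IsSemisimple := by
  have h_comm : Module.End.IsSemisimple (map g f : Module.End K (W ⊗[K] V)) :=
    (LinearEquiv.isSemisimple_iff _ _ (TensorProduct.comm K V W) (TensorProduct.ext rfl)).mp h
  exact ⟨isSemisimple_left_of_isSemisimple_map hf hg h,
    isSemisimple_left_of_isSemisimple_map hg hf h_comm⟩

/-- If the Kronecker product `f ⊗ g` of two nonzero endomorphisms of nonzero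
finite-dimensional vector spaces over an algebraically closed field is semisimple,
then both `f` and `g` are semisimple. -/
theorem isSemisimple_of_tensorProduct_map_isSemisimple
    {K : Type*} [Field K] [IsAlgClosed K]
    {V W : Type*} [AddCommGroup V] [Module K V] [AddCommGroup W] [Module K W]
    [FiniteDimensional K V] [FiniteDimensional K W]
    [Nontrivial V] [Nontrivial W]
    (f : Module.End K V) (g : Module.End K W)
    (hf : f ≠ 0) (hg : g ≠ 0)
    (h : Module.End.IsSemisimple (TensorProduct.map f g : Module.End K (V ⊗[K] W))) :
    f.IsSemisimple ∧ g.IsSemisimple :=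
  isSemisimple_of_tensorProduct_map_isSemisimple_general f g hf hg h
end

section
/- Let k be a field, V and W two-dimensional k-vector spaces, and f : V → V, g : W → W linear endomorphisms with det f = 1 and det g = 1. If the Kronecker product f ⊗ g is the identity endomorphism of V ⊗[k] W, then there exists ε ∈ {1, −1} with f = ε·id_V and g = ε·id_W. -/
/-!
Contracting `f ⊗ g = id` against a functional on `W` shows that `f` is a scalar `a`, and
symmetrically `g` is a scalar `b`. Then `a * b = 1`, while `det f = a ^ 2 = 1` forces `a = ±1`
and hence `b = a⁻¹ = a`.
-/

open TensorProduct

namespace TensorProduct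

variable {k V W : Type*} [Field k] [AddCommGroup V] [Module k V] [AddCommGroup W] [Module k W]

/- For `ψ` with `ψ (g w) = 1`, contracting the second factor of `f v ⊗ g w = v ⊗ w`
gives `f v = ψ w • v`. -/
theorem exists_eq_smul_id_of_map_eq_id [Nontrivial (V ⊗[k] W)]
    {f : Module.End k V} {g : Module.End k W} (h : map f g = LinearMap.id) :
    ∃ c : k, f = c • LinearMap.id := by
  have hg : g ≠ 0 := by
    rintro rfl
    exact one_ne_zero (h.symm.trans (map_zero_right f))
  obtain ⟨w, hw⟩ : ∃ w, g w ≠ 0 := by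
    by_contra! hg'
    exact hg (LinearMap.ext hg')
  obtain ⟨ψ, hψ⟩ := Module.Projective.exists_dual_eq_one k hw
  refine ⟨ψ w, LinearMap.ext fun v => ?_⟩
  simpa [hψ] using congr(TensorProduct.rid k V (map LinearMap.id ψ ($h (v ⊗ₜ w))))

theorem map_eq_id_symm {f : Module.End k V} {g : Module.End k W}
    (h : map f g = LinearMap.id) : map g f = LinearMap.id := by
  refine LinearMap.ext fun x => (TensorProduct.comm k W V).injective ?_
  rw [← map_comm, h, LinearMap.id_apply, LinearMap.id_apply]

end TensorProduct

theorem tensorProduct_map_eq_id_of_det_one_general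
    {k : Type*} [Field k]
    {V W : Type*} [AddCommGroup V] [Module k V] [AddCommGroup W] [Module k W]
    (hV : Module.finrank k V = 2) (hW : Module.finrank k W = 2)
    (f : Module.End k V) (g : Module.End k W)
    (hf : LinearMap.det f = 1)
    (h : TensorProduct.map f g = (LinearMap.id : Module.End k (V ⊗[k] W))) :
    ∃ ε : k, (ε = 1 ∨ ε = -1) ∧ f = ε • (LinearMap.id : Module.End k V)
      ∧ g = ε • (LinearMap.id : Module.End k W) := by
  have := Module.nontrivial_of_finrank_eq_succ hV
  have := Module.nontrivial_of_finrank_eq_succ hW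
  obtain ⟨a, rfl⟩ := exists_eq_smul_id_of_map_eq_id h
  obtain ⟨b, rfl⟩ := exists_eq_smul_id_of_map_eq_id (map_eq_id_symm h)
  have hab : a * b = 1 := by
    obtain ⟨x, hx⟩ := exists_ne (0 : V ⊗[k] W)
    refine smul_left_injective k hx ?_
    simpa [map_smul_left, map_smul_right, mul_smul, smul_comm b a] using congr($h x)
  have ha : a ^ 2 = 1 := by simpa [hV] using hf
  have hba : b = a := by linear_combination a * hab - b * ha
  exact ⟨a, sq_eq_one_iff.mp ha, rfl, by rw [hba]⟩

/-- If `f` and `g` are determinant-one endomorphisms of two-dimensional vector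
spaces whose Kronecker product is the identity, then `f = ε·id` and `g = ε·id`
for a common sign `ε ∈ {1, -1}`. -/
theorem tensorProduct_map_eq_id_of_det_one
    {k : Type*} [Field k]
    {V W : Type*} [AddCommGroup V] [Module k V] [AddCommGroup W] [Module k W]
    [FiniteDimensional k V] [FiniteDimensional k W]
    (hV : Module.finrank k V = 2) (hW : Module.finrank k W = 2)
    (f : Module.End k V) (g : Module.End k W)
    (hf : LinearMap.det f = 1) (hg : LinearMap.det g = 1)
    (h : TensorProduct.map f g = (LinearMap.id : Module.End k (V ⊗[k] W))) :
    ∃ ε : k, (ε = 1 ∨ ε = -1) ∧ f = ε • (LinearMap.id : Module.End k V)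
      ∧ g = ε • (LinearMap.id : Module.End k W) :=
  tensorProduct_map_eq_id_of_det_one_general hV hW f g hf h
end

section
/- Let K be a pure cubic number field, i.e., [K : ℚ] = 3 and K = ℚ(α) for some α ∈ K with α³ ∈ ℚ, and suppose the discriminant of K equals −3·f² for an even positive integer f. Then the prime 2 is totally ramified in K: there is a prime ideal 𝔭 of the ring of integers 𝒪_K with 2·𝒪_K = 𝔭³. -/
/-!
Rescaling `α` by a nonzero rational gives a generator `θ` of `K` with `θ³ = 2ʳ w`, `r < 3` and
`w` odd. For `r = 0` the discriminant of `ℤ[θ]` is `-27 w²`; it is odd and a square multiple of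
`disc K`, which contradicts `f` being even. For `r = 1` (and for `r = 2`, after replacing `θ` by
`θ² / 2`) the ideal equation `(2)(w) = (θ)³` with `(2)` and `(w)` coprime makes `(2)` the cube of
an ideal of norm `2`, which is therefore prime.
-/

open NumberField Polynomial IntermediateField Module

theorem Int.exists_eq_two_pow_mul_odd {N : ℤ} (hN : N ≠ 0) :
    ∃ (v : ℕ) (w : ℤ), Odd w ∧ N = 2 ^ v * w := by
  obtain ⟨v, m, hm, h⟩ := Nat.exists_eq_two_pow_mul_odd (Int.natAbs_ne_zero.mpr hN)
  have hm' : Odd (m : ℤ) := by exact_mod_cast hm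
  rcases Int.natAbs_eq N with hN | hN
  · exact ⟨v, m, hm', by rw [hN, h]; push_cast; ring⟩
  · exact ⟨v, -m, hm'.neg, by rw [hN, h]; push_cast; ring⟩

theorem Rat.exists_pow_mul_eq_two_pow_mul_odd {q : ℚ} (hq : q ≠ 0) {n : ℕ} (hn : n ≠ 0) :
    ∃ c : ℚ, c ≠ 0 ∧ ∃ r < n, ∃ w : ℤ, Odd w ∧ c ^ n * q = 2 ^ r * w := by
  obtain ⟨k, rfl⟩ := Nat.exists_eq_add_one_of_ne_zero hn
  obtain ⟨v, w, hw, hvw⟩ := Int.exists_eq_two_pow_mul_odd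
    (mul_ne_zero (Rat.num_ne_zero.mpr hq) (pow_ne_zero k (Int.natCast_ne_zero.mpr q.den_ne_zero)))
  have hclear : (q.den : ℚ) ^ (k + 1) * q = 2 ^ v * w := by
    have h := congrArg (Int.cast : ℤ → ℚ) hvw
    push_cast [← Rat.mul_den_eq_num] at h
    linear_combination h
  refine ⟨q.den / 2 ^ (v / (k + 1)), by positivity, v % (k + 1), Nat.mod_lt v k.succ_pos, w, hw, ?_⟩
  rw [div_pow, div_mul_eq_mul_div, hclear, div_eq_iff (by positivity)]
  conv_lhs => rw [← Nat.mod_add_div v (k + 1)]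
  ring

theorem IntermediateField.adjoin_simple_algebraMap_mul {F E : Type*} [Field F] [Field E]
    [Algebra F E] {c : F} (hc : c ≠ 0) (x : E) : F⟮algebraMap F E c * x⟯ = F⟮x⟯ := by
  refine le_antisymm (adjoin_simple_le_iff.mpr ?_) (adjoin_simple_le_iff.mpr ?_)
  · exact mul_mem (algebraMap_mem _ c) (mem_adjoin_simple_self F x)
  · have h := mul_mem (algebraMap_mem F⟮algebraMap F E c * x⟯ c⁻¹)
      (mem_adjoin_simple_self F (algebraMap F E c * x))
    rwa [← mul_assoc, ← map_mul, inv_mul_cancel₀ hc, map_one, one_mul] at h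

theorem isIntegral_of_pow_eq_intCast {A : Type*} [CommRing A] {n : ℕ} (hn : n ≠ 0) {θ : A}
    {a : ℤ} (h : θ ^ n = a) : IsIntegral ℤ θ :=
  IsIntegral.of_pow (Nat.pos_of_ne_zero hn) (h ▸ isIntegral_algebraMap (x := a))

namespace NumberField

variable {K : Type*} [Field K] [NumberField K]

theorem exists_isPrime_span_natCast_eq_pow {n : ℕ} (hn : finrank ℚ K = n) {p : ℕ}
    (hp : p.Prime) {u : ℤ} (hpu : IsCoprime (p : ℤ) u) {θ : K} (hθ : θ ^ n = p * u) :
    ∃ P : Ideal (𝓞 K), P.IsPrime ∧ Ideal.span {(p : 𝓞 K)} = P ^ n := by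
  have hn0 : n ≠ 0 := hn ▸ finrank_pos.ne'
  let t : 𝓞 K := ⟨θ, isIntegral_of_pow_eq_intCast hn0 (a := p * u) (by push_cast; exact hθ)⟩
  have ht : t ^ n = (p : 𝓞 K) * (u : 𝓞 K) := RingOfIntegers.coe_injective (by push_cast; exact hθ)
  have hcop : IsCoprime (Ideal.span {(p : 𝓞 K)}) (Ideal.span {(u : 𝓞 K)}) := by
    rw [Ideal.isCoprime_span_singleton_iff]
    simpa using hpu.map (Int.castRingHom (𝓞 K))
  obtain ⟨P, hP⟩ := exists_eq_pow_of_mul_eq_pow_of_coprime hcop (by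
    rw [Ideal.span_singleton_mul_span_singleton, Ideal.span_singleton_pow, ht])
  have hnorm : Ideal.absNorm P = p := by
    refine Nat.pow_left_injective hn0 (show _ ^ n = p ^ n from ?_)
    rw [← map_pow, ← hP, Ideal.absNorm_span_natCast, RingOfIntegers.rank, hn]
  exact ⟨P, Ideal.isPrime_of_irreducible_absNorm (hnorm ▸ hp), hP⟩

theorem exists_discr_basis_eq_sq_mul_discr {ι : Type*} [Fintype ι] [DecidableEq ι]
    (b : Basis ι ℚ K) (hb : ∀ i, IsIntegral ℤ (b i)) :
    ∃ r : ℤ, Algebra.discr ℚ b = r ^ 2 * discr K := by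
  let b₀ := (integralBasis K).reindex ((integralBasis K).indexEquiv b)
  have hint : ∀ i j, IsIntegral ℤ (b₀.toMatrix b i j) := by
    intro i j
    rw [Basis.toMatrix_apply, Basis.repr_reindex_apply,
      show b j = algebraMap (𝓞 K) K (show 𝓞 K from ⟨b j, hb j⟩) from rfl, integralBasis_repr_apply]
    exact isIntegral_algebraMap
  obtain ⟨r, hr⟩ := IsIntegrallyClosed.isIntegral_iff.mp (IsIntegral.det hint)
  refine ⟨r, ?_⟩
  rw [← b₀.toMatrix_map_vecMul b, Algebra.discr_of_matrix_vecMul, ← hr, Basis.coe_reindex,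
    Algebra.discr_reindex, ← coe_discr]
  simp

theorem discr_dvd_of_pow_eq_intCast {n : ℕ} (hn : finrank ℚ K = n) {θ : K} (hθ : ℚ⟮θ⟯ = ⊤)
    {a : ℤ} (ha : θ ^ n = a) : discr K ∣ n ^ n * a ^ (n - 1) := by
  subst hn
  have hn0 : finrank ℚ K ≠ 0 := finrank_pos.ne'
  have hθℚ : θ ^ finrank ℚ K = algebraMap ℚ K a := by simpa using ha
  have hmin : minpoly ℚ θ = X ^ finrank ℚ K - C (a : ℚ) :=
    (minpoly.eq_of_irreducible_of_monic (irreducible_X_pow_sub_C_of_root_adjoin_eq_top hθℚ hθ)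
      (by simp [hθℚ]) (monic_X_pow_sub_C _ hn0)).symm
  let pb := PowerBasis.ofAdjoinEqTop (IsIntegral.of_finite ℚ θ)
    (Algebra.adjoin_eq_top_of_primitive_element (IsAlgebraic.of_finite ℚ θ) hθ)
  have hnorm : |Algebra.norm ℚ θ| = |(a : ℚ)| := by
    refine (pow_left_inj₀ (abs_nonneg _) (abs_nonneg _) hn0).mp ?_
    rw [← abs_pow, ← abs_pow, ← map_pow, hθℚ, Algebra.norm_algebraMap]
  -- `disc(Xⁿ - a) = ± nⁿ aⁿ⁻¹`; only its absolute value matters for divisibility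
  have hpb : |Algebra.discr ℚ pb.basis| =
      ((finrank ℚ K ^ finrank ℚ K * |a| ^ (finrank ℚ K - 1) : ℤ) : ℚ) := by
    rw [Algebra.discr_powerBasis_eq_norm ℚ pb, PowerBasis.ofAdjoinEqTop_gen, hmin]
    simp [derivative_X_pow, hnorm, Algebra.norm_natCast]
  obtain ⟨r, hr⟩ := exists_discr_basis_eq_sq_mul_discr pb.basis fun i => by
    rw [pb.basis_eq_pow]
    exact (isIntegral_of_pow_eq_intCast hn0 ha).pow _
  rw [hr] at hpb
  have habs : |r ^ 2 * discr K| = finrank ℚ K ^ finrank ℚ K * |a| ^ (finrank ℚ K - 1) := by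
    exact_mod_cast hpb
  rw [← dvd_abs, abs_mul, abs_pow, abs_pow, Nat.abs_cast, ← habs]
  exact (dvd_abs _ _).mpr (dvd_mul_left _ _)

theorem odd_discr_of_pow_eq_odd {n : ℕ} (hn : finrank ℚ K = n) (hn_odd : Odd n) {θ : K}
    (hθ : ℚ⟮θ⟯ = ⊤) {w : ℤ} (hw : Odd w) (h : θ ^ n = w) : Odd (discr K) := by
  rw [← Int.not_even_iff_odd, even_iff_two_dvd]
  intro h2
  have hodd : Odd ((n : ℤ) ^ n * w ^ (n - 1)) := (hn_odd.natCast.pow).mul hw.pow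
  exact Int.not_even_iff_odd.mpr hodd
    (even_iff_two_dvd.mpr (h2.trans (discr_dvd_of_pow_eq_intCast hn hθ h)))

end NumberField

theorem two_totally_ramified_in_pure_cubic_general
    (K : Type*) [Field K] [NumberField K]
    (hdeg : Module.finrank ℚ K = 3)
    (α : K) (hα : IntermediateField.adjoin ℚ {α} = ⊤)
    (q : ℚ) (hq : α ^ 3 = (q : K))
    (f : ℕ) (hfe : Even f)
    (hdisc : NumberField.discr K = -3 * (f : ℤ) ^ 2) :
    ∃ P : Ideal (NumberField.RingOfIntegers K), P.IsPrime ∧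
      Ideal.span {(2 : NumberField.RingOfIntegers K)} = P ^ 3 := by
  have hq0 : q ≠ 0 := by
    rintro rfl
    rw [Rat.cast_zero, pow_eq_zero_iff three_ne_zero] at hq
    have h := IntermediateField.finrank_bot (F := ℚ) (E := K)
    rw [← adjoin_zero, ← hq, hα, finrank_top', hdeg] at h
    exact absurd h (by norm_num)
  obtain ⟨c, hc, r, hr, w, hw, hcq⟩ := Rat.exists_pow_mul_eq_two_pow_mul_odd hq0 three_ne_zero
  set θ := algebraMap ℚ K c * α
  have hθgen : ℚ⟮θ⟯ = ⊤ := (adjoin_simple_algebraMap_mul hc α).trans hα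
  have hθ : θ ^ 3 = 2 ^ r * w := by
    rw [mul_pow, hq, eq_ratCast]
    exact_mod_cast congrArg (Rat.cast : ℚ → K) hcq
  have hcop : ∀ {u : ℤ}, Odd u → IsCoprime ((2 : ℕ) : ℤ) u :=
    fun ⟨k, hk⟩ => ⟨-k, 1, by rw [hk]; push_cast; ring⟩
  interval_cases r
  · have hodd := odd_discr_of_pow_eq_odd hdeg (by decide) hθgen hw (by simpa using hθ)
    rw [hdisc, ← Int.not_even_iff_odd] at hodd
    exact (hodd (by simp [Int.even_pow, hfe])).elim
  · simpa using exists_isPrime_span_natCast_eq_pow hdeg Nat.prime_two (hcop hw) (by simpa using hθ)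
  · have hθ' : (θ ^ 2 / 2) ^ 3 = ((2 : ℕ) : K) * ((w ^ 2 : ℤ) : K) := by
      rw [div_pow, ← pow_mul, mul_comm 2 3, pow_mul, hθ]
      push_cast
      ring
    simpa using exists_isPrime_span_natCast_eq_pow hdeg Nat.prime_two (hcop hw.pow) hθ'

/-- If `K` is a pure cubic number field whose discriminant is `-3 f²` with `f`
even and positive, then the prime `2` is totally ramified in `K`:
`2·𝒪_K = 𝔭³` for some prime ideal `𝔭` of the ring of integers. -/
theorem two_totally_ramified_in_pure_cubic
    (K : Type*) [Field K] [NumberField K]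
    (hdeg : Module.finrank ℚ K = 3)
    (α : K) (hα : IntermediateField.adjoin ℚ {α} = ⊤)
    (q : ℚ) (hq : α ^ 3 = (q : K))
    (f : ℕ) (hf : 0 < f) (hfe : Even f)
    (hdisc : NumberField.discr K = -3 * (f : ℤ) ^ 2) :
    ∃ P : Ideal (NumberField.RingOfIntegers K), P.IsPrime ∧
      Ideal.span {(2 : NumberField.RingOfIntegers K)} = P ^ 3 :=
  two_totally_ramified_in_pure_cubic_general K hdeg α hα q hq f hfe hdisc
end
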